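/- Every unate Boolean function h : {0,1}^k → {0,1} can be written as a conjunction h = w_1 ∧ ⋯ ∧ w_r of clauses, where each clause w_i is a disjunction of literals (variables or negations of variables) and the number of clauses satisfies r ≤ C(k, ⌊k/2⌋), the binomial coefficient of k and ⌊k/2⌋. -/

import Mathlib

/-- A clause: a disjunction of literals, i.e. there are sets `Sp`, `Sn` of indices with
`w x = ⋁_{j∈Sp} x j ∨ ⋁_{j∈Sn} ¬ x j`. -/
def IsClause {k : ℕ} (w : (Fin k → Bool) → Bool) : Prop :=
  ∃ Sp Sn : Finset (Fin k),
    ∀ x, w x = decide ((∃ j ∈ Sp, x j = true) ∨ (∃ j ∈ Sn, x j = false))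

/-- A Boolean function is unate if, in each variable, it is monotone nondecreasing or
monotone nonincreasing (with the other variables held fixed). -/
def Unate {k : ℕ} (h : (Fin k → Bool) → Bool) : Prop :=
  ∀ i : Fin k,
    (∀ x, h (Function.update x i false) = true → h (Function.update x i true) = true) ∨
    (∀ x, h (Function.update x i true) = true → h (Function.update x i false) = true)

/-!
Flipping the variables in which `h` is nonincreasing turns `h` into a monotone function of the
set `s` of variables carrying their "favoured" value. A monotone Boolean function on `Finset α`
is false exactly on the sets lying below one of its maximal false sets `m`, so it is the
conjunction, over these `m`, of the clauses "some variable outside `m` carries its favoured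
value". The maximal false sets form an antichain, and Sperner's theorem bounds their number by
`C(k, ⌊k/2⌋)`.
-/

open Finset Function

section MaximalFalse

variable {α : Type*} [Fintype α]

open Classical in
noncomputable def maximalFalse (f : Finset α → Bool) : Finset (Finset α) :=
  univ.filter (Maximal fun t => f t = false)

theorem mem_maximalFalse {f : Finset α → Bool} {m : Finset α} :
    m ∈ maximalFalse f ↔ Maximal (fun t => f t = false) m := by
  classical simp [maximalFalse]

theorem card_maximalFalse_le (f : Finset α → Bool) :
    #(maximalFalse f) ≤ (Fintype.card α).choose (Fintype.card α / 2) :=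
  IsAntichain.sperner fun _ hs _ ht ↦
    setOfPred_maximal_antichain (fun t => f t = false) (mem_maximalFalse.1 hs)
      (mem_maximalFalse.1 ht)

theorem Monotone.eq_true_iff_forall_maximalFalse {f : Finset α → Bool} (hf : Monotone f)
    (s : Finset α) : f s = true ↔ ∀ m ∈ maximalFalse f, ¬ s ⊆ m := by
  constructor
  · intro hs m hm hsm
    have hfm : f m = false := (mem_maximalFalse.1 hm).prop
    simpa [hs, hfm] using Bool.le_iff_imp.1 (hf hsm)
  · contrapose!
    intro hs
    obtain ⟨m, hsm, hm⟩ := Finite.exists_le_maximal (p := fun t => f t = false) (by simpa using hs)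
    exact ⟨m, mem_maximalFalse.2 hm, hsm⟩

end MaximalFalse

section Orientation

variable {α : Type*} [DecidableEq α]

/-- The point at which variable `i` carries the value `decide (i ∈ P)` exactly when `i ∈ s`. -/
def orientedIndicator (P s : Finset α) : α → Bool := fun i => decide (i ∈ s ↔ i ∈ P)

theorem orientedIndicator_insert (P s : Finset α) (a : α) :
    orientedIndicator P (insert a s) = update (orientedIndicator P s) a (decide (a ∈ P)) := by
  funext i
  by_cases hi : i = a
  · subst hi; simp [orientedIndicator]
  · simp [orientedIndicator, hi]

variable [Fintype α]

theorem orientedIndicator_surjective (P : Finset α) :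
    Surjective (orientedIndicator P) := by
  intro x
  refine ⟨univ.filter fun i => x i = decide (i ∈ P), funext fun i => ?_⟩
  by_cases hi : i ∈ P <;> cases hx : x i <;> simp [orientedIndicator, hi, hx]

def orientedClause (P m : Finset α) (x : α → Bool) : Bool :=
  decide (∃ i ∉ m, x i = decide (i ∈ P))

theorem orientedClause_orientedIndicator (P m s : Finset α) :
    orientedClause P m (orientedIndicator P s) = true ↔ ¬ s ⊆ m := by
  rw [orientedClause, decide_eq_true_iff, not_subset]
  refine exists_congr fun i => ?_
  by_cases hs : i ∈ s <;> by_cases hP : i ∈ P <;> simp [orientedIndicator, hs, hP]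

end Orientation

theorem isClause_orientedClause {k : ℕ} (P m : Finset (Fin k)) :
    IsClause (orientedClause P m) := by
  refine ⟨mᶜ ∩ P, mᶜ \ P, fun x => decide_eq_decide.2 ?_⟩
  simp only [mem_inter, mem_sdiff, mem_compl, ← exists_or]
  refine exists_congr fun i => ?_
  by_cases hP : i ∈ P <;> simp [hP]

theorem Unate.exists_monotone_comp_orientedIndicator {k : ℕ} {h : (Fin k → Bool) → Bool}
    (hu : Unate h) : ∃ P, Monotone (h ∘ orientedIndicator P) := by
  classical
  set P := univ.filter fun i => ∀ x, h (update x i false) = true → h (update x i true) = true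
  refine ⟨P, monotone_iff_forall_le_insert.2 fun s a ha => ?_⟩
  rw [comp_apply, comp_apply, orientedIndicator_insert]
  set x := orientedIndicator P s
  have hx : update x a (!decide (a ∈ P)) = x :=
    update_eq_self_iff.2 (by simp [x, orientedIndicator, ha])
  rw [← hx, update_idem, Bool.le_iff_imp]
  by_cases haP : a ∈ P
  · simpa [haP] using (mem_filter.1 haP).2 x
  · simpa [haP] using (hu a).resolve_left (by simpa [P] using haP) x

/-- Every unate Boolean function in `k` variables can be written as a conjunction
`h = w_1 ∧ ⋯ ∧ w_r` of clauses with `r ≤ C(k, ⌊k/2⌋)` clauses. -/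
theorem unate_cnf_card_le {k : ℕ} (h : (Fin k → Bool) → Bool) (hu : Unate h) :
    ∃ (r : ℕ) (w : Fin r → (Fin k → Bool) → Bool),
      r ≤ Nat.choose k (k / 2) ∧ (∀ j, IsClause (w j)) ∧
      ∀ x, h x = decide (∀ j, w j x = true) := by
  obtain ⟨P, hmono⟩ := hu.exists_monotone_comp_orientedIndicator
  set M := maximalFalse (h ∘ orientedIndicator P)
  refine ⟨#M, fun j => orientedClause P (M.equivFin.symm j),
    by simpa using card_maximalFalse_le (h ∘ orientedIndicator P),
    fun j => isClause_orientedClause _ _, fun x => ?_⟩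
  obtain ⟨s, rfl⟩ := orientedIndicator_surjective P x
  rw [Bool.eq_iff_iff, decide_eq_true_iff]
  simp only [orientedClause_orientedIndicator]
  rw [M.equivFin.symm.forall_congr_right (q := fun m : M => ¬ s ⊆ m), Subtype.forall]
  exact hmono.eq_true_iff_forall_maximalFalse s
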